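/- arXiv:1902.04492 — 2 statements merged into one kernel-verified Lean document; each statement's English description precedes it below -/
import Mathlib

section
/- Let W be a Krein-selfadjoint operator on H and B ∈ L(H) with closed range. Then the following are equivalent: (i) there exists X₀ ∈ L(H) such that (BX₀ − I)^# W (BX₀ − I) ≤ (BX − I)^# W (BX − I) in the Krein order for every X ∈ L(H); (ii) range(B) is W-nonnegative and H = range(B) + W⁻¹(range(B)^[⊥]); (iii) range(B) is W-nonnegative and the normal equation B^# W (BX − I) = 0 admits a solution X ∈ L(H). -/
open ContinuousLinearMap

/-- The Krein adjoint `T^# = J ∘ T* ∘ J`. -/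
noncomputable def kadj {H : Type*} [NormedAddCommGroup H] [InnerProductSpace ℂ H]
    [CompleteSpace H] (J T : H →L[ℂ] H) : H →L[ℂ] H := J ∘L adjoint T ∘L J

/-- The Krein order: `S ≤ T` iff `J ∘ (T - S)` is a positive operator. -/
def kLE {H : Type*} [NormedAddCommGroup H] [InnerProductSpace ℂ H]
    [CompleteSpace H] (J S T : H →L[ℂ] H) : Prop := (J ∘L (T - S)).IsPositive

/-! Multiplying by `J` turns the Krein notions into Hilbert-space ones: with `A = J W`, which is
selfadjoint, `J (BX - 1)^# W (BX - 1) = (BX - 1)* A (BX - 1)`, so the Krein order becomes the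
Loewner order, and the normal equation becomes `B* A (BX - 1) = 0`. For `X = X₀ + C` the two
quadratic forms differ by `C* N + N* C + C* (B* A B) C` with `N = B* A (BX₀ - 1)`. For `C = t N`
this is `2t N* N + t² N* (B* A B) N`, nonnegative for every real `t` only if `N = 0`; then `C = 1`
gives `B* A B ≥ 0`. Conversely these two facts make the difference `C* (B* A B) C ≥ 0`.

The decomposition `H = ran B + ker (B* A)` is equivalent to solvability of the normal equation:
`P B` is onto `(ker B* A)ᗮ`, where `P` is the orthogonal projection, so by the open mapping
theorem it has a bounded right inverse `R`, and `X = R P` satisfies `BXh - h ∈ ker (B* A)`. -/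

open scoped InnerProductSpace

lemma eq_zero_of_forall_nonneg_mul_add_sq_mul {a b : ℝ} (h : ∀ t : ℝ, 0 ≤ t * a + t ^ 2 * b) :
    a = 0 := by
  have hdiscrim := discrim_le_zero (a := b) (b := a) (c := 0) fun t => by linarith [h t]
  rw [discrim] at hdiscrim
  nlinarith [sq_nonneg a]

section StarRing

variable {R : Type*} [Ring R] [StarRing R]

def residualForm (a b x : R) : R := star (b * x - 1) * a * (b * x - 1)

lemma residualForm_sub_residualForm {a : R} (ha : IsSelfAdjoint a) (b x₀ x : R) :
    residualForm a b x - residualForm a b x₀ =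
      star (x - x₀) * (star b * a * (b * x₀ - 1)) + star (star b * a * (b * x₀ - 1)) * (x - x₀)
        + star (x - x₀) * (star b * a * b) * (x - x₀) := by
  have hx : b * x - 1 = (b * x₀ - 1) + b * (x - x₀) := by noncomm_ring
  simp only [residualForm, hx, star_add, star_mul, ha.star_eq, star_star]
  noncomm_ring

end StarRing

namespace ContinuousLinearMap

variable {𝕜 E : Type*} [RCLike 𝕜] [NormedAddCommGroup E] [InnerProductSpace 𝕜 E] [CompleteSpace E]

lemma nonneg_star_mul_mul_iff {A : E →L[𝕜] E} (hA : IsSelfAdjoint A) (B : E →L[𝕜] E) :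
    0 ≤ star B * A * B ↔ ∀ x, 0 ≤ RCLike.re ⟪A (B x), B x⟫_𝕜 := by
  rw [nonneg_iff_isPositive, isPositive_def', and_iff_right (hA.conjugate' B)]
  simp only [reApplyInnerSelf_apply, mul_apply_eq_comp, star_eq_adjoint, adjoint_inner_left]

lemma residualForm_le_of_star_mul_mul_eq_zero {A B X₀ : E →L[𝕜] E} (hA : IsSelfAdjoint A)
    (hB : 0 ≤ star B * A * B) (hX₀ : star B * A * (B * X₀ - 1) = 0) (X : E →L[𝕜] E) :
    residualForm A B X₀ ≤ residualForm A B X := by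
  rw [le_def, residualForm_sub_residualForm hA, hX₀, star_zero, mul_zero, zero_mul, zero_add,
    zero_add]
  rw [nonneg_iff_isPositive] at hB
  exact hB.adjoint_conj (X - X₀)

lemma star_mul_mul_eq_zero_of_forall_residualForm_le {A B X₀ : E →L[𝕜] E}
    (hA : IsSelfAdjoint A) (hX₀ : ∀ X, residualForm A B X₀ ≤ residualForm A B X) :
    star B * A * (B * X₀ - 1) = 0 := by
  obtain ⟨N, hN⟩ : ∃ N, star B * A * (B * X₀ - 1) = N := ⟨_, rfl⟩
  have hdir : ∀ t : ℝ, (star ((t : 𝕜) • N) * N + star N * ((t : 𝕜) • N)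
      + star ((t : 𝕜) • N) * (star B * A * B) * ((t : 𝕜) • N)).IsPositive := fun t => by
    simpa only [le_def, residualForm_sub_residualForm hA, add_sub_cancel_left, hN]
      using hX₀ (X₀ + (t : 𝕜) • N)
  rw [hN]
  ext x
  suffices 2 * ‖N x‖ ^ 2 = 0 by simpa using this
  refine eq_zero_of_forall_nonneg_mul_add_sq_mul (b := RCLike.re ⟪A (B (N x)), B (N x)⟫_𝕜)
    fun t => ?_
  have := (hdir t).2 x
  simp only [star_smul, RCLike.star_def, RCLike.conj_ofReal, star_eq_adjoint,
    Algebra.smul_mul_assoc, Algebra.mul_smul_comm, reApplyInnerSelf_apply, add_apply, smul_apply,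
    mul_apply_eq_comp, inner_add_left, inner_smul_left, adjoint_inner_left,
    inner_self_eq_norm_sq_to_K, map_add, RCLike.mul_re, RCLike.ofReal_re, RCLike.re_ofReal_pow,
    RCLike.ofReal_im, RCLike.im_ofReal_pow, mul_zero, sub_zero, zero_mul, RCLike.mul_im,
    add_zero] at this
  linear_combination this

theorem forall_residualForm_le_iff {A : E →L[𝕜] E} (hA : IsSelfAdjoint A) (B X₀ : E →L[𝕜] E) :
    (∀ X, residualForm A B X₀ ≤ residualForm A B X) ↔
      0 ≤ star B * A * B ∧ star B * A * (B * X₀ - 1) = 0 := by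
  refine ⟨fun hX₀ => ?_, fun h => residualForm_le_of_star_mul_mul_eq_zero hA h.1 h.2⟩
  have hN := star_mul_mul_eq_zero_of_forall_residualForm_le hA hX₀
  refine ⟨?_, hN⟩
  have h := hX₀ (X₀ + 1)
  rw [le_def, residualForm_sub_residualForm hA, hN, add_sub_cancel_left] at h
  simpa only [star_one, mul_one, one_mul, star_zero, mul_zero, zero_add, nonneg_iff_isPositive]
    using h

lemma adjoint_apply_eq_zero_iff {F : Type*} [NormedAddCommGroup F] [InnerProductSpace 𝕜 F]
    [CompleteSpace F] (B : E →L[𝕜] F) (z : F) : adjoint B z = 0 ↔ ∀ y, ⟪z, B y⟫_𝕜 = 0 :=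
  ⟨fun h y => by rw [← adjoint_inner_left, h, inner_zero_left],
    fun h => ext_inner_right 𝕜 fun y => by rw [adjoint_inner_left, h, inner_zero_left]⟩

section RightInverse

variable {F : Type*} [NormedAddCommGroup F] [NormedSpace 𝕜 F]

theorem HasRightInverse.of_surjective [CompleteSpace F] {f : E →L[𝕜] F}
    (hf : Function.Surjective f) : f.HasRightInverse := by
  let K := LinearMap.ker (f : E →ₗ[𝕜] F)
  let e := equivProdOfSurjectiveOfIsCompl f K.orthogonalProjectionOnto
    (LinearMap.range_eq_top.mpr hf)
    (LinearMap.range_eq_top.mpr fun v => ⟨v, K.orthogonalProjectionOnto_mem_subspace_eq_self v⟩)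
    (by rw [Submodule.ker_orthogonalProjectionOnto]; exact K.isCompl_orthogonal)
  exact ⟨(e.symm : F × K →L[𝕜] E) ∘L inl 𝕜 F K,
    fun y => congrArg Prod.fst (e.apply_symm_apply (y, 0))⟩

theorem exists_apply_sub_mem_of_forall_eq_add {G : Type*} [NormedAddCommGroup G] [InnerProductSpace 𝕜 G]
    [CompleteSpace G] {B : G →L[𝕜] E} {N : Submodule 𝕜 E} [N.HasOrthogonalProjection]
    (h : ∀ x, ∃ u, ∃ v ∈ N, x = B u + v) : ∃ X : E →L[𝕜] G, ∀ x, B (X x) - x ∈ N := by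
  let π := Nᗮ.orthogonalProjectionOnto
  have hπ : ∀ v, π v = 0 ↔ v ∈ N := fun v => by
    rw [Submodule.orthogonalProjectionOnto_eq_zero_iff, N.orthogonal_orthogonal]
  obtain ⟨R, hR⟩ := HasRightInverse.of_surjective (f := π ∘L B) fun y => by
    obtain ⟨u, v, hv, hy⟩ := h y
    refine ⟨u, ?_⟩
    have hπy := congrArg π hy
    rwa [map_add, (hπ v).mpr hv, add_zero, Submodule.orthogonalProjectionOnto_mem_subspace_eq_self,
      eq_comm] at hπy
  exact ⟨R ∘L π, fun x => (hπ _).mp (by rw [map_sub, sub_eq_zero]; exact hR (π x))⟩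

theorem exists_comp_sub_one_eq_zero_iff (B : E →L[𝕜] E) (C : E →L[𝕜] F) :
    (∃ X : E →L[𝕜] E, C ∘L (B ∘L X - 1) = 0) ↔ ∀ x, ∃ u v, x = B u + v ∧ C v = 0 := by
  refine ⟨fun ⟨X, hX⟩ x => ⟨X x, x - B (X x), by abel, ?_⟩, fun h => ?_⟩
  · simpa [map_sub] using congrArg (fun T => -T x) hX
  · obtain ⟨X, hX⟩ := exists_apply_sub_mem_of_forall_eq_add (B := B) (N := LinearMap.ker (C : E →ₗ[𝕜] F))
      fun x => let ⟨u, v, hx, hv⟩ := h x; ⟨u, v, hv, hx⟩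
    exact ⟨X, ext fun x => by simpa using hX x⟩

end RightInverse

end ContinuousLinearMap

section Krein

variable {H : Type*} [NormedAddCommGroup H] [InnerProductSpace ℂ H] [CompleteSpace H]
  {J : H →L[ℂ] H}

lemma isSelfAdjoint_comp_of_kadj_eq (hJ : IsSelfAdjoint J) (hJ2 : J ∘L J = 1) {W : H →L[ℂ] H}
    (hW : kadj J W = W) : IsSelfAdjoint (J ∘L W) := by
  rw [isSelfAdjoint_iff', adjoint_comp, hJ.adjoint_eq]
  conv_rhs => rw [← hW, kadj, ← comp_assoc, hJ2]
  rfl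

lemma kLE_iff_residualForm_le (hJ2 : J ∘L J = 1) (W B X₀ X : H →L[ℂ] H) :
    kLE J (kadj J (B ∘L X₀ - 1) ∘L (W ∘L (B ∘L X₀ - 1)))
        (kadj J (B ∘L X - 1) ∘L (W ∘L (B ∘L X - 1))) ↔
      residualForm (J ∘L W) B X₀ ≤ residualForm (J ∘L W) B X := by
  have hJJ : ∀ x, J (J x) = x := fun x => congrArg (· x) hJ2
  rw [kLE, le_def]
  convert Iff.rfl using 2
  ext x
  simp [kadj, residualForm, hJJ, star_eq_adjoint, mul_def, adjoint_comp, one_def]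

lemma kadj_comp_eq_zero_iff (hJ2 : J ∘L J = 1) (W B D : H →L[ℂ] H) :
    kadj J B ∘L (W ∘L D) = 0 ↔ star B * (J ∘L W) * D = 0 := by
  change J ∘L (star B * (J ∘L W) * D) = 0 ↔ _
  refine ⟨fun h => ?_, fun h => by rw [h, comp_zero]⟩
  have hJh := congrArg (J ∘L ·) h
  rwa [← comp_assoc, hJ2, comp_zero] at hJh

end Krein

theorem stmt5_general {H : Type*} [NormedAddCommGroup H] [InnerProductSpace ℂ H] [CompleteSpace H]
    (J : H →L[ℂ] H) (hJ : IsSelfAdjoint J) (hJ2 : J ∘L J = 1)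
    (W : H →L[ℂ] H) (hW : kadj J W = W)
    (B : H →L[ℂ] H) :
    ((∃ X₀ : H →L[ℂ] H, ∀ X : H →L[ℂ] H,
        kLE J (kadj J (B ∘L X₀ - 1) ∘L (W ∘L (B ∘L X₀ - 1)))
          (kadj J (B ∘L X - 1) ∘L (W ∘L (B ∘L X - 1)))) ↔
      ((∀ x : H, 0 ≤ (inner ℂ ((J ∘L W) (B x)) (B x) : ℂ).re) ∧
        ∀ h : H, ∃ u v : H, h = B u + v ∧
          ∀ y : H, (inner ℂ (J (W v)) (B y) : ℂ) = 0)) ∧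
    (((∀ x : H, 0 ≤ (inner ℂ ((J ∘L W) (B x)) (B x) : ℂ).re) ∧
        ∀ h : H, ∃ u v : H, h = B u + v ∧
          ∀ y : H, (inner ℂ (J (W v)) (B y) : ℂ) = 0) ↔
      ((∀ x : H, 0 ≤ (inner ℂ ((J ∘L W) (B x)) (B x) : ℂ).re) ∧
        ∃ X : H →L[ℂ] H, kadj J B ∘L (W ∘L (B ∘L X - 1)) = 0)) := by
  have hA := isSelfAdjoint_comp_of_kadj_eq hJ hJ2 hW
  have hmin : (∃ X₀ : H →L[ℂ] H, ∀ X : H →L[ℂ] H,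
      kLE J (kadj J (B ∘L X₀ - 1) ∘L (W ∘L (B ∘L X₀ - 1)))
        (kadj J (B ∘L X - 1) ∘L (W ∘L (B ∘L X - 1)))) ↔
      0 ≤ star B * (J ∘L W) * B ∧ ∃ X, star B * (J ∘L W) * (B ∘L X - 1) = 0 := by
    simp_rw [kLE_iff_residualForm_le hJ2, forall_residualForm_le_iff hA]
    exact exists_and_left
  have hdecomp : (∀ h : H, ∃ u v : H, h = B u + v ∧ ∀ y : H, (inner ℂ (J (W v)) (B y) : ℂ) = 0) ↔
      ∃ X, star B * (J ∘L W) * (B ∘L X - 1) = 0 := by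
    simp_rw [← adjoint_apply_eq_zero_iff]
    exact (exists_comp_sub_one_eq_zero_iff B (adjoint B ∘L (J ∘L W))).symm
  have hnonneg : 0 ≤ star B * (J ∘L W) * B ↔
      ∀ x : H, 0 ≤ (inner ℂ ((J ∘L W) (B x)) (B x) : ℂ).re :=
    nonneg_star_mul_mul_iff hA B
  simp only [hmin, hdecomp, kadj_comp_eq_zero_iff hJ2, hnonneg, iff_self, and_self]

/-- existence of a minimum of `(BX − I)^# W (BX − I)` over `X` is
equivalent to `range B` being `W`-nonnegative plus `S`-complementability of `W`
(`H = range B + W⁻¹(range B^[⊥])`), and also to the solvability of the normal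
equation `B^# W (BX − I) = 0`. -/
theorem stmt5 {H : Type*} [NormedAddCommGroup H] [InnerProductSpace ℂ H] [CompleteSpace H]
    (J : H →L[ℂ] H) (hJ : IsSelfAdjoint J) (hJ2 : J ∘L J = 1)
    (W : H →L[ℂ] H) (hW : kadj J W = W)
    (B : H →L[ℂ] H) (hB : IsClosed (Set.range ⇑B)) :
    ((∃ X₀ : H →L[ℂ] H, ∀ X : H →L[ℂ] H,
        kLE J (kadj J (B ∘L X₀ - 1) ∘L (W ∘L (B ∘L X₀ - 1)))
          (kadj J (B ∘L X - 1) ∘L (W ∘L (B ∘L X - 1)))) ↔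
      ((∀ x : H, 0 ≤ (inner ℂ ((J ∘L W) (B x)) (B x) : ℂ).re) ∧
        ∀ h : H, ∃ u v : H, h = B u + v ∧
          ∀ y : H, (inner ℂ (J (W v)) (B y) : ℂ) = 0)) ∧
    (((∀ x : H, 0 ≤ (inner ℂ ((J ∘L W) (B x)) (B x) : ℂ).re) ∧
        ∀ h : H, ∃ u v : H, h = B u + v ∧
          ∀ y : H, (inner ℂ (J (W v)) (B y) : ℂ) = 0) ↔
      ((∀ x : H, 0 ≤ (inner ℂ ((J ∘L W) (B x)) (B x) : ℂ).re) ∧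
        ∃ X : H →L[ℂ] H, kadj J B ∘L (W ∘L (B ∘L X - 1)) = 0)) :=
  stmt5_general J hJ hJ2 W hW B
end

section
/- Let W be a Krein-selfadjoint operator on H, B, C ∈ L(H) with B of closed range, and let Q ∈ L(H) be a projection (Q² = Q) with range(Q) = range(B) and W ∘ Q = Q^# ∘ W. If Z ∈ L(H) satisfies the normal equation B^# W (BZ − C) = 0, then (BZ − C)^# ∘ W ∘ (BZ − C) = C^# ∘ W(I − Q) ∘ C. -/
/-!
Write `R = BZ - C`. Since `ker B* = (range B)ᗮ = (range Q)ᗮ = ker Q*`, the normal equation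
`B^# W R = 0` forces `W Q R = Q^# W R = 0`. As `Q B = B`, this says
`W B Z = W Q C`, i.e. `W R = -W (I - Q) C`. Finally
`R^# W R = Z^# (B^# W R) - C^# W R = C^# W (I - Q) C`.
-/

open ContinuousLinearMap

namespace ContinuousLinearMap

theorem comp_eq_self_of_range_le {R M N : Type*} [Semiring R] [TopologicalSpace M]
    [AddCommMonoid M] [Module R M] [TopologicalSpace N] [AddCommMonoid N] [Module R N]
    {Q : M →L[R] M} (hQ : Q ∘L Q = Q) {T : N →L[R] M}
    (hran : LinearMap.range (T : N →ₗ[R] M) ≤ LinearMap.range (Q : M →ₗ[R] M)) :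
    Q ∘L T = T := by
  have hQ' : IsIdempotentElem (Q : M →ₗ[R] M) := congr(($hQ : M →ₗ[R] M))
  exact coe_injective ((LinearMap.IsIdempotentElem.comp_eq_right_iff hQ' (T : N →ₗ[R] M)).mpr hran)

theorem adjoint_comp_eq_zero_of_range_le {𝕜 E F G : Type*} [RCLike 𝕜]
    [NormedAddCommGroup E] [InnerProductSpace 𝕜 E] [CompleteSpace E]
    [NormedAddCommGroup F] [InnerProductSpace 𝕜 F] [CompleteSpace F]
    [NormedAddCommGroup G] [InnerProductSpace 𝕜 G] {P T : E →L[𝕜] F} {X : G →L[𝕜] F}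
    (hran : LinearMap.range (P : E →ₗ[𝕜] F) ≤ LinearMap.range (T : E →ₗ[𝕜] F))
    (hX : adjoint T ∘L X = 0) : adjoint P ∘L X = 0 := by
  ext x
  have hT : X x ∈ (adjoint T).ker := by
    simpa using congr($hX x)
  have hP : X x ∈ (adjoint P).ker := by
    rw [← orthogonal_range] at hT ⊢
    exact Submodule.orthogonal_le hran hT
  simpa using hP

end ContinuousLinearMap

section KreinAdjoint

variable {H : Type*} [NormedAddCommGroup H] [InnerProductSpace ℂ H] [CompleteSpace H]
  {J : H →L[ℂ] H}

theorem kadj_sub (J S T : H →L[ℂ] H) : kadj J (S - T) = kadj J S - kadj J T := by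
  simp only [kadj, map_sub, sub_comp, comp_sub]

theorem kadj_comp (hJ2 : J ∘L J = 1) (S T : H →L[ℂ] H) :
    kadj J (S ∘L T) = kadj J T ∘L kadj J S := by
  simp only [kadj, adjoint_comp, comp_assoc]
  rw [← comp_assoc J J, hJ2, one_def, id_comp]

theorem kadj_comp_eq_zero_of_range_le (hJ2 : J ∘L J = 1) {P T X : H →L[ℂ] H}
    (hran : LinearMap.range (P : H →ₗ[ℂ] H) ≤ LinearMap.range (T : H →ₗ[ℂ] H))
    (hX : kadj J T ∘L X = 0) : kadj J P ∘L X = 0 := by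
  have hTX : adjoint T ∘L (J ∘L X) = 0 := by
    calc adjoint T ∘L (J ∘L X) = J ∘L (kadj J T ∘L X) := by
          simp only [kadj, ← comp_assoc, hJ2, one_def, id_comp]
      _ = 0 := by rw [hX, comp_zero]
  simp only [kadj, comp_assoc, adjoint_comp_eq_zero_of_range_le hran hTX, comp_zero]

end KreinAdjoint

theorem stmt13_general {H : Type*} [NormedAddCommGroup H] [InnerProductSpace ℂ H] [CompleteSpace H]
    (J : H →L[ℂ] H) (hJ2 : J ∘L J = 1)
    (W : H →L[ℂ] H)
    (B C : H →L[ℂ] H)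
    (Q : H →L[ℂ] H) (hQ : Q ∘L Q = Q)
    (hQran : LinearMap.range (Q : H →ₗ[ℂ] H) = LinearMap.range (B : H →ₗ[ℂ] H))
    (hWQ : W ∘L Q = kadj J Q ∘L W)
    (Z : H →L[ℂ] H) (hZ : kadj J B ∘L (W ∘L (B ∘L Z - C)) = 0) :
    kadj J (B ∘L Z - C) ∘L (W ∘L (B ∘L Z - C)) =
      kadj J C ∘L ((W ∘L (1 - Q)) ∘L C) := by
  have hQB : Q ∘L B = B := comp_eq_self_of_range_le hQ hQran.ge
  have hWQR : W ∘L Q ∘L (B ∘L Z - C) = 0 := by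
    rw [← comp_assoc, hWQ, comp_assoc, kadj_comp_eq_zero_of_range_le hJ2 hQran.le hZ]
  have hWR : W ∘L (B ∘L Z - C) = -((W ∘L (1 - Q)) ∘L C) := by
    calc W ∘L (B ∘L Z - C) = W ∘L (B ∘L Z - C) - W ∘L Q ∘L (B ∘L Z - C) := by
          rw [hWQR, sub_zero]
      _ = -((W ∘L (1 - Q)) ∘L C) := by
          rw [comp_sub Q, ← comp_assoc Q B, hQB]
          simp only [comp_sub, sub_comp, one_def, id_comp, comp_assoc]
          abel
  calc kadj J (B ∘L Z - C) ∘L (W ∘L (B ∘L Z - C))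
      = kadj J Z ∘L (kadj J B ∘L (W ∘L (B ∘L Z - C))) - kadj J C ∘L (W ∘L (B ∘L Z - C)) := by
        rw [kadj_sub, kadj_comp hJ2, sub_comp, comp_assoc]
    _ = kadj J C ∘L ((W ∘L (1 - Q)) ∘L C) := by
        rw [hZ, comp_zero, zero_sub, hWR, comp_neg, neg_neg]

/-- if `Z` solves the normal equation `B^# W (BZ − C) = 0` and `Q` is a
projection onto `range B` with `W ∘ Q = Q^# ∘ W`, then
`(BZ − C)^# W (BZ − C) = C^# W (I − Q) C`. -/
theorem stmt13 {H : Type*} [NormedAddCommGroup H] [InnerProductSpace ℂ H] [CompleteSpace H]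
    (J : H →L[ℂ] H) (hJ : IsSelfAdjoint J) (hJ2 : J ∘L J = 1)
    (W : H →L[ℂ] H) (hW : kadj J W = W)
    (B C : H →L[ℂ] H) (hB : IsClosed (Set.range ⇑B))
    (Q : H →L[ℂ] H) (hQ : Q ∘L Q = Q)
    (hQran : LinearMap.range (Q : H →ₗ[ℂ] H) = LinearMap.range (B : H →ₗ[ℂ] H))
    (hWQ : W ∘L Q = kadj J Q ∘L W)
    (Z : H →L[ℂ] H) (hZ : kadj J B ∘L (W ∘L (B ∘L Z - C)) = 0) :
    kadj J (B ∘L Z - C) ∘L (W ∘L (B ∘L Z - C)) =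
      kadj J C ∘L ((W ∘L (1 - Q)) ∘L C) :=
  stmt13_general J hJ2 W B C Q hQ hQran hWQ Z hZ
end
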